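/- arXiv:1705.02957 — 4 statements merged into one kernel-verified Lean document; each statement's English description precedes it below -/
import Mathlib

section
/- Fix an integer m ≥ 0 and ε > 0. For each N, let K = N and let the channel gains form an m-dependent frequency-selective channel in which each |h_{n,n,k}| has a continuous unbounded distribution. Suppose M ≥ (m+1)(e+ε)·ln N. Then for every r > 0, the probability that the M-FSIG possesses a pure Nash equilibrium with at least rN sharing users tends to 0 as N → ∞; equivalently, max_{a* ∈ P_e} N_c(a*)/N → 0 in probability as N → ∞ (with the maximum interpreted as 0 when the set P_e of pure Nash equilibria is empty). -/
/-!
In an equilibrium, a user that shares its RE finds each of its `M` best REs occupied by another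
user: moving to a free one would remove all interference and lift its utility to the ceiling
`log₂ (1 + P_n σ_n² / N0)`, where `σ_n` is its `M`-th best gain. With at least `rN` sharing users
at most `N - rN/2` REs are occupied, so every sharing user has gains below `σ_n` on some `rN/2`
free REs. Take the threshold `t_n` with `P(|h_{n,n,k}| > t_n) = c/N`. Either all free REs lie
below `t_n`, of probability at most `exp (-c r / (2(m+1)))` because a residue class mod `m+1` of
them is independent, or at least `min M N` gains exceed `t_n`, of probability at most
`c / min M N` by Markov. Users are independent, so the union bound over the occupied set and over
`⌈rN⌉` sharing users gives `4^N p^⌈rN⌉`, `p` the sum of the two bounds; this decays geometrically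
once `c` is large and `M → ∞`.
-/

open MeasureTheory ProbabilityTheory Filter

/-- The cumulative distribution function of a real random variable `X` under `μ`. -/
noncomputable def cdfOf {Ω : Type*} [MeasurableSpace Ω] (μ : Measure Ω) (X : Ω → ℝ) : ℝ → ℝ :=
  fun x => (μ {ω | X ω ≤ x}).toReal

/-- `orderStat v j` is the `j`-th smallest value (1-indexed) among `v 0, …, v (K-1)`. -/
noncomputable def orderStat {K : ℕ} (v : Fin K → ℝ) (j : ℕ) : ℝ :=
  ((Finset.univ.val.map v).sort (· ≤ ·)).getD (j - 1) 0

/-- A finite family of random variables is `m`-dependent: every subfamily whose indices are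
pairwise more than `m` apart is jointly independent. -/
def MDepFam {Ω β : Type*} [MeasurableSpace Ω] [MeasurableSpace β] (μ : Measure Ω) (m : ℕ)
    {K : ℕ} (X : Fin K → Ω → β) : Prop :=
  ∀ S : Finset (Fin K),
    (∀ i ∈ S, ∀ j ∈ S, i ≠ j → (m : ℤ) < |(i : ℤ) - (j : ℤ)|) →
    iIndepFun (fun i : S => X i.1) μ

/-- `F` has an exponentially-dominated tail with parameters `(α, β, lam, γ)`:
`(1 - F x)/(α x^β e^{-lam x^γ}) → 1` as `x → ∞`. -/
def ExpDomTail (F : ℝ → ℝ) (α β lam γ : ℝ) : Prop :=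
  Tendsto (fun x : ℝ => (1 - F x) / (α * x ^ β * Real.exp (-lam * x ^ γ))) atTop (nhds 1)

/-- Interference experienced by user `n` on RE `k` under the profile `a`. -/
noncomputable def interf {N : ℕ} (h : Fin N → Fin N → Fin N → ℂ) (P : Fin N → ℝ)
    (a : Fin N → Fin N) (n k : Fin N) : ℝ :=
  ∑ m ∈ Finset.univ.filter (fun m => m ≠ n ∧ a m = k), ‖h m n k‖ ^ 2 * P m

/-- Achievable rate of user `n` under the profile `a`, treating interference as noise. -/
noncomputable def rate {N : ℕ} (h : Fin N → Fin N → Fin N → ℂ) (P : Fin N → ℝ) (N0 : ℝ)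
    (a : Fin N → Fin N) (n : Fin N) : ℝ :=
  Real.logb 2 (1 + P n * ‖h n n (a n)‖ ^ 2 / (N0 + interf h P a n (a n)))

/-- Pure Nash equilibrium of the game with utilities `u` (utility of user `n` at profile `a`
is `u a n`). -/
def IsPNE {N : ℕ} (u : (Fin N → Fin N) → Fin N → ℝ) (a : Fin N → Fin N) : Prop :=
  ∀ n k, u (Function.update a n k) n ≤ u a n

/-- The M-FSIG utility of user `n` at profile `a`. -/
noncomputable def mfsigUtil {N : ℕ} (h : Fin N → Fin N → Fin N → ℂ) (P : Fin N → ℝ)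
    (N0 : ℝ) (M : ℕ) (a : Fin N → Fin N) (n : Fin N) : ℝ :=
  if orderStat (fun k => ‖h n n k‖) (N - M + 1) ≤ ‖h n n (a n)‖ then
    Real.logb 2 (1 + P n * orderStat (fun k => ‖h n n k‖) (N - M + 1) ^ 2 /
      (N0 + interf h P a n (a n)))
  else 0

/-- Weighted sum-rate `W(a) = ∑ n, w n * R n (a)`. -/
noncomputable def wsum {N : ℕ} (h : Fin N → Fin N → Fin N → ℂ) (P : Fin N → ℝ) (N0 : ℝ)
    (w : Fin N → ℝ) (a : Fin N → Fin N) : ℝ :=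
  ∑ n, w n * rate h P N0 a n

/-- Number of sharing users of a profile `a`. -/
noncomputable def numSharing {N : ℕ} (a : Fin N → Fin N) : ℕ :=
  (Finset.univ.filter fun n => ∃ m, m ≠ n ∧ a m = a n).card

/-- The channel gains `h` form an `m`-dependent frequency-selective channel:
(i) for fixed transmitter/receiver pair the gains over REs are identically distributed and
a.s. nonzero; (ii) gains of distinct pairs are mutually independent; (iii) for each pair the
family over REs is `m`-dependent. -/
structure MDepChannel {Ω : Type*} [MeasurableSpace Ω] (μ : Measure Ω) (m : ℕ) {N K : ℕ}
    (h : Fin N → Fin N → Fin K → Ω → ℂ) : Prop where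
  meas : ∀ n1 n2 k, Measurable (h n1 n2 k)
  ident : ∀ n1 n2 k k', IdentDistrib (h n1 n2 k) (h n1 n2 k') μ μ
  nonzero : ∀ n1 n2 k, ∀ᵐ ω ∂μ, h n1 n2 k ω ≠ 0
  indepPairs : iIndepFun
      (fun (p : Fin N × Fin N) ω => (fun k => h p.1 p.2 k ω)) μ
  mdep : ∀ n1 n2, MDepFam μ m (fun k => h n1 n2 k)

open Finset
open scoped ENNReal

section OrderStat

variable {K : ℕ} (v : Fin K → ℝ)

lemma exists_orderStat_eq {j : ℕ} (hj : j - 1 < K) : ∃ k, orderStat v j = v k := by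
  have hmem : orderStat v j ∈ (univ.val.map v).sort (· ≤ ·) := by
    rw [orderStat, List.getD_eq_getElem _ _ (by simpa using hj)]
    exact List.getElem_mem _
  obtain ⟨k, -, hk⟩ := Multiset.mem_map.1 ((Multiset.mem_sort _).1 hmem)
  exact ⟨k, hk.symm⟩

lemma le_card_filter_orderStat_le {j : ℕ} (hj1 : 1 ≤ j) (hjK : j ≤ K) :
    K + 1 - j ≤ #{k | orderStat v j ≤ v k} := by
  set l := (univ.val.map v).sort (· ≤ ·)
  have hlen : l.length = K := by simp [l]
  have hj : j - 1 < l.length := by omega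
  have hsorted : l.Pairwise (· ≤ ·) := Multiset.pairwise_sort _ _
  have hge : ∀ x ∈ l.drop (j - 1), orderStat v j ≤ x := by
    intro x hx
    obtain ⟨i, hi, rfl⟩ := List.mem_iff_getElem.1 hx
    rw [List.getElem_drop, orderStat, List.getD_eq_getElem _ _ hj]
    exact hsorted.rel_get_of_le (a := ⟨j - 1, hj⟩) (b := ⟨j - 1 + i, by simp at hi; omega⟩)
      (by simp [Fin.le_def])
  have hcount : #{k | orderStat v j ≤ v k} = l.countP (fun x => orderStat v j ≤ x) := by
    rw [card_def, filter_val, ← Multiset.countP_map v univ.val (fun x => orderStat v j ≤ x),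
      ← Multiset.sort_eq (univ.val.map v) (· ≤ ·), Multiset.coe_countP]
  calc K + 1 - j = (l.drop (j - 1)).length := by simp [hlen]; omega
    _ = (l.drop (j - 1)).countP (fun x => orderStat v j ≤ x) :=
      (List.countP_eq_length.2 fun x hx => decide_eq_true (hge x hx)).symm
    _ ≤ l.countP (fun x => orderStat v j ≤ x) := (List.drop_sublist _ _).countP_le
    _ = _ := hcount.symm

end OrderStat

def lowOutsideOrManyAbove {K : ℕ} (O : Finset (Fin K)) (t : ℝ) (M' : ℕ) : Set (Fin K → ℝ) :=
  {v | (∀ k ∉ O, v k ≤ t) ∨ M' ≤ #{k | t < v k}}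

lemma mem_lowOutsideOrManyAbove_of_orderStat {K j : ℕ} {v : Fin K → ℝ} (hj1 : 1 ≤ j)
    (hjK : j ≤ K) {O : Finset (Fin K)} (hO : ∀ k, orderStat v j ≤ v k → k ∈ O) (t : ℝ) :
    v ∈ lowOutsideOrManyAbove O t (K + 1 - j) := by
  by_cases hσt : orderStat v j ≤ t
  · exact Or.inl fun k hk => by
      by_contra! hlt
      exact hk (hO k (hσt.trans hlt.le))
  · refine Or.inr ((le_card_filter_orderStat_le v hj1 hjK).trans (card_le_card ?_))
    intro k hk
    simp only [mem_filter, mem_univ, true_and] at hk ⊢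
    exact (not_le.1 hσt).trans_le hk

lemma measurableSet_lowOutsideOrManyAbove {K : ℕ} (O : Finset (Fin K)) (t : ℝ) (M' : ℕ) :
    MeasurableSet (lowOutsideOrManyAbove O t M') := by
  have hcard : Measurable fun v : Fin K → ℝ => #{k | t < v k} := by
    simp only [card_filter]
    refine Finset.measurable_sum _ fun k _ => Measurable.ite ?_ measurable_const measurable_const
    exact measurableSet_lt measurable_const (measurable_pi_apply k)
  refine MeasurableSet.union ?_ (hcard (measurableSet_Ici (a := M')))
  exact measurableSet_setOfPred.2 <| Measurable.forall fun k => Measurable.forall fun _ =>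
    measurableSet_setOfPred.1 (measurableSet_le (measurable_pi_apply k) measurable_const)

lemma card_filter_exists_ne_eq_add_two_mul_card_image_le {ι α : Type*} [Fintype ι]
    [DecidableEq ι] [DecidableEq α] (f : ι → α) :
    #{i | ∃ j, j ≠ i ∧ f j = f i} + 2 * #(univ.image f) ≤ 2 * Fintype.card ι := by
  set U : Finset ι := {i | ∃ j, j ≠ i ∧ f j = f i}
  have hU : 2 * #(U.image f) ≤ #U := by
    refine mul_card_image_le_card U 2 fun y hy => ?_
    obtain ⟨i, hi, rfl⟩ := mem_image.1 hy
    obtain ⟨j, hji, hfj⟩ := (mem_filter.1 hi).2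
    have hj : j ∈ U := mem_filter.2 ⟨mem_univ _, i, hji.symm, hfj.symm⟩
    calc 2 = #{j, i} := (card_pair hji).symm
      _ ≤ _ := card_le_card (by simp [insert_subset_iff, hj, hi, hfj])
  have hUc : #(Uᶜ.image f) ≤ #Uᶜ := card_image_le
  have himage : univ.image f = U.image f ∪ Uᶜ.image f := by
    rw [← image_union, union_compl]
  have := card_union_le (U.image f) (Uᶜ.image f)
  have := card_compl_add_card U
  rw [himage]
  omega

lemma numSharing_le_two_mul_card_compl_image {N : ℕ} (b : Fin N → Fin N) :
    numSharing b ≤ 2 * #(univ.image b)ᶜ := by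
  have key := card_filter_exists_ne_eq_add_two_mul_card_image_le b
  rw [Fintype.card_fin] at key
  have hsh : numSharing b + 2 * #(univ.image b) ≤ 2 * N := by
    -- `numSharing` decides its filter through `Nat.decidableExistsFin`
    convert key using 2; unfold numSharing; congr
  rw [card_compl, Fintype.card_fin]
  omega

lemma lt_abs_sub_of_mod_eq {m i j : ℕ} (hij : i ≠ j) (h : i % (m + 1) = j % (m + 1)) :
    (m : ℤ) < |(i : ℤ) - j| := by
  have hd : ((m + 1 : ℕ) : ℤ) ∣ (i : ℤ) - j := Nat.modEq_iff_dvd.1 h.symm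
  have hne : (i : ℤ) - j ≠ 0 := by omega
  have := Int.le_of_dvd (abs_pos.2 hne) ((dvd_abs _ _).2 hd)
  push_cast at this
  linarith

lemma exists_subset_pairwise_lt_abs_sub {K : ℕ} (m : ℕ) (B : Finset (Fin K)) :
    ∃ B' ⊆ B, (#B : ℝ) / (m + 1) ≤ #B' ∧
      ∀ i ∈ B', ∀ j ∈ B', i ≠ j → (m : ℤ) < |(i : ℤ) - (j : ℤ)| := by
  obtain ⟨g, -, hg⟩ := exists_le_card_fiber_of_nsmul_le_card_of_maps_to
    (s := B) (t := range (m + 1)) (f := fun k => k.val % (m + 1)) (b := (#B : ℝ) / (m + 1))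
    (fun k _ => mem_range.2 (Nat.mod_lt _ m.succ_pos)) ⟨0, by simp⟩
    (by rw [card_range, nsmul_eq_mul, Nat.cast_succ, mul_div_cancel₀ _ (by positivity)])
  refine ⟨_, filter_subset _ B, hg, fun i hi j hj hij => ?_⟩
  exact lt_abs_sub_of_mod_eq (Fin.val_ne_of_ne hij)
    ((mem_filter.1 hi).2.trans (mem_filter.1 hj).2.symm)

section MDepFam

variable {Ω β γ : Type*} [MeasurableSpace Ω] [MeasurableSpace β] [MeasurableSpace γ]
  {μ : Measure Ω} {m K : ℕ}

lemma MDepFam.comp {X : Fin K → Ω → β} (hX : MDepFam μ m X) {g : β → γ} (hg : Measurable g) :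
    MDepFam μ m fun k => g ∘ X k :=
  fun S hS => (hX S hS).comp (fun _ => g) fun _ => hg

lemma MDepFam.measure_biInter_preimage_eq_prod {X : Fin K → Ω → β} (hX : MDepFam μ m X)
    {B : Finset (Fin K)} (hB : ∀ i ∈ B, ∀ j ∈ B, i ≠ j → (m : ℤ) < |(i : ℤ) - (j : ℤ)|)
    {s : Set β} (hs : MeasurableSet s) :
    μ (⋂ k ∈ B, X k ⁻¹' s) = ∏ k ∈ B, μ (X k ⁻¹' s) := by
  have := (hX B hB).measure_inter_preimage_eq_mul univ (sets := fun _ => s) fun _ _ => hs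
  simpa [Set.iInter_subtype, prod_attach B fun k => μ (X k ⁻¹' s)] using this

lemma MDepFam.measure_forall_le_le {Y : Fin K → Ω → ℝ} (hY : MDepFam μ m Y) {t θ : ℝ}
    (hθ0 : 0 ≤ θ) (hθ1 : θ ≤ 1) (ht : ∀ k, μ {ω | Y k ω ≤ t} = ENNReal.ofReal (1 - θ))
    (B : Finset (Fin K)) :
    μ {ω | ∀ k ∈ B, Y k ω ≤ t} ≤ ENNReal.ofReal (Real.exp (-(θ * #B / (m + 1)))) := by
  obtain ⟨B', hB'B, hcard, hB'⟩ := exists_subset_pairwise_lt_abs_sub m B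
  calc μ {ω | ∀ k ∈ B, Y k ω ≤ t}
      ≤ μ (⋂ k ∈ B', Y k ⁻¹' Set.Iic t) :=
        measure_mono fun ω hω => Set.mem_iInter₂.2 fun k hk => hω k (hB'B hk)
    _ = ENNReal.ofReal ((1 - θ) ^ #B') := by
        rw [hY.measure_biInter_preimage_eq_prod hB' measurableSet_Iic,
          ENNReal.ofReal_pow (by linarith), ← prod_const]
        exact prod_congr rfl fun k _ => ht k
    _ ≤ ENNReal.ofReal (Real.exp (-(θ * #B / (m + 1)))) := by
        refine ENNReal.ofReal_le_ofReal ?_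
        calc (1 - θ) ^ #B' ≤ Real.exp (-θ) ^ #B' :=
              pow_le_pow_left₀ (by linarith) (by linarith [Real.add_one_le_exp (-θ)]) _
          _ = Real.exp (-(θ * #B')) := by rw [← Real.exp_nat_mul]; ring_nf
          _ ≤ _ := by
              gcongr
              rw [mul_div_assoc]
              exact mul_le_mul_of_nonneg_left hcard hθ0

end MDepFam

section Probability

variable {Ω : Type*} [MeasurableSpace Ω] {μ : Measure Ω}

lemma mul_measure_le_card_filter_le_sum {ι : Type*} [Fintype ι] {p : ι → Ω → Prop}
    [∀ i ω, Decidable (p i ω)] (hp : ∀ i, MeasurableSet {ω | p i ω}) (n : ℕ) :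
    n * μ {ω | n ≤ #{i | p i ω}} ≤ ∑ i, μ {ω | p i ω} := by
  set f : Ω → ℝ≥0∞ := fun ω => ∑ i, {ω | p i ω}.indicator 1 ω
  have hf : ∀ ω, f ω = #{i | p i ω} := fun ω => by
    simp [f, Set.indicator_apply]
  have hmeas : Measurable f :=
    Finset.measurable_sum _ fun i _ => measurable_one.indicator (hp i)
  calc (n : ℝ≥0∞) * μ {ω | n ≤ #{i | p i ω}} = n * μ {ω | (n : ℝ≥0∞) ≤ f ω} := by
        simp_rw [hf, Nat.cast_le]
    _ ≤ ∫⁻ ω, f ω ∂μ := mul_meas_ge_le_lintegral₀ hmeas.aemeasurable _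
    _ = ∑ i, μ {ω | p i ω} := by
        rw [lintegral_finsetSum _ fun i _ => measurable_one.indicator (hp i)]
        simp [lintegral_indicator_one (hp _)]

lemma exists_cdfOf_eq [IsProbabilityMeasure μ] {X : Ω → ℝ} (hX : ∀ ω, 0 ≤ X ω)
    (hcont : Continuous (cdfOf μ X)) {y : ℝ} (hy0 : 0 ≤ y) (hy1 : y < 1) :
    ∃ t, cdfOf μ X t = y := by
  have hneg : cdfOf μ X (-1) = 0 := by
    have : {ω | X ω ≤ -1} = ∅ := Set.eq_empty_of_forall_notMem fun ω (hω : X ω ≤ -1) => by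
      linarith [hX ω]
    simp [cdfOf, this]
  have htop : Tendsto (cdfOf μ X) atTop (nhds 1) := by
    have hmono : Monotone fun x : ℝ => {ω | X ω ≤ x} := fun x y hxy ω hω => le_trans hω hxy
    have hunion : (⋃ x : ℝ, {ω | X ω ≤ x}) = Set.univ :=
      Set.eq_univ_of_forall fun ω => Set.mem_iUnion.2 ⟨X ω, le_refl (X ω)⟩
    have := tendsto_measure_iUnion_atTop (μ := μ) hmono
    rw [hunion, measure_univ] at this
    exact (ENNReal.tendsto_toReal ENNReal.one_ne_top).comp this
  obtain ⟨x, hx⟩ := (htop.eventually (eventually_ge_nhds hy1)).exists_forall_of_atTop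
  obtain ⟨t, -, ht⟩ := intermediate_value_Icc (le_max_left (-1) x) hcont.continuousOn
    ⟨hneg ▸ hy0, hx _ (le_max_right _ _)⟩
  exact ⟨t, ht⟩

lemma ProbabilityTheory.IdentDistrib.cdfOf_eq {X Y : Ω → ℝ} (hXY : IdentDistrib X Y μ μ) :
    cdfOf μ X = cdfOf μ Y :=
  funext fun _ => congrArg ENNReal.toReal (hXY.measure_mem_eq measurableSet_Iic)

lemma measure_biUnion_powersetCard_biInter_le {ι α : Type*} [MeasurableSpace α] [Fintype ι]
    {Y : ι → Ω → α} (hY : iIndepFun Y μ)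
    {S : ι → Set α} (hS : ∀ i, MeasurableSet (S i)) {p : ℝ≥0∞} (hp : ∀ i, μ (Y i ⁻¹' S i) ≤ p)
    (k : ℕ) :
    μ (⋃ U ∈ powersetCard k (univ : Finset ι), ⋂ i ∈ U, Y i ⁻¹' S i) ≤
      (Fintype.card ι).choose k * p ^ k :=
  calc _ ≤ ∑ U ∈ powersetCard k univ, μ (⋂ i ∈ U, Y i ⁻¹' S i) := measure_biUnion_finset_le _ _
    _ ≤ ∑ U ∈ powersetCard k (univ : Finset ι), p ^ k := sum_le_sum fun U hU => by
        rw [hY.measure_inter_preimage_eq_mul U fun i _ => hS i, ← (mem_powersetCard.1 hU).2]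
        exact prod_le_pow_card _ _ _ fun i _ => hp i
    _ = _ := by rw [sum_const, card_powersetCard, card_univ, nsmul_eq_mul]

lemma MDepFam.measure_preimage_lowOutsideOrManyAbove_le [IsProbabilityMeasure μ] {m K M' : ℕ}
    {Y : Fin K → Ω → ℝ} (hY : MDepFam μ m Y) (hYm : ∀ k, Measurable (Y k)) {t θ : ℝ}
    (hθ0 : 0 ≤ θ) (hθ1 : θ ≤ 1)
    (ht : ∀ k, cdfOf μ (Y k) t = 1 - θ) (O : Finset (Fin K)) (hM' : 0 < M') :
    μ ((fun ω k => Y k ω) ⁻¹' lowOutsideOrManyAbove O t M') ≤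
      ENNReal.ofReal (Real.exp (-(θ * #Oᶜ / (m + 1))) + K * θ / M') := by
  have hle : ∀ k, μ {ω | Y k ω ≤ t} = ENNReal.ofReal (1 - θ) := fun k => by
    rw [← ht k, cdfOf, ENNReal.ofReal_toReal (measure_ne_top _ _)]
  have hlt : ∀ k, μ {ω | t < Y k ω} = ENNReal.ofReal θ := fun k => by
    have hcompl : {ω | t < Y k ω} = {ω | Y k ω ≤ t}ᶜ := by ext; simp
    rw [hcompl, prob_compl_eq_one_sub (measurableSet_le (hYm k) measurable_const), hle k,
      ← ENNReal.ofReal_one, ← ENNReal.ofReal_sub _ (by linarith), sub_sub_cancel]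
  have hmarkov : μ {ω | M' ≤ #{k | t < Y k ω}} ≤ ENNReal.ofReal (K * θ / M') := by
    have := mul_measure_le_card_filter_le_sum (μ := μ)
      (p := fun k ω => t < Y k ω) (fun k => measurableSet_lt measurable_const (hYm k)) M'
    simp only [hlt, sum_const, card_univ, Fintype.card_fin, nsmul_eq_mul] at this
    rw [ENNReal.ofReal_div_of_pos (by positivity), ENNReal.ofReal_mul (by positivity),
      ENNReal.ofReal_natCast, ENNReal.ofReal_natCast,
      ENNReal.le_div_iff_mul_le (by simp [hM'.ne']) (by simp), mul_comm]
    exact this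
  calc μ ((fun ω k => Y k ω) ⁻¹' lowOutsideOrManyAbove O t M')
      = μ ({ω | ∀ k ∈ Oᶜ, Y k ω ≤ t} ∪ {ω | M' ≤ #{k | t < Y k ω}}) := by
        congr 1; ext; simp [lowOutsideOrManyAbove]
    _ ≤ μ {ω | ∀ k ∈ Oᶜ, Y k ω ≤ t} + μ {ω | M' ≤ #{k | t < Y k ω}} := measure_union_le _ _
    _ ≤ ENNReal.ofReal (Real.exp (-(θ * #Oᶜ / (m + 1)))) + ENNReal.ofReal (K * θ / M') :=
        add_le_add (hY.measure_forall_le_le hθ0 hθ1 hle _) hmarkov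
    _ = _ := (ENNReal.ofReal_add (by positivity) (by positivity)).symm

end Probability

section Game

variable {N : ℕ} (h : Fin N → Fin N → Fin N → ℂ) {P : Fin N → ℝ} {N0 : ℝ}

lemma interf_nonneg (hP : ∀ n, 0 ≤ P n) (a : Fin N → Fin N) (n k : Fin N) :
    0 ≤ interf h P a n k :=
  sum_nonneg fun m _ => mul_nonneg (sq_nonneg _) (hP m)

lemma interf_pos_of_sharing (hh : ∀ m n k, h m n k ≠ 0) (hP : ∀ n, 0 < P n)
    {a : Fin N → Fin N} {n : Fin N} (hn : ∃ m, m ≠ n ∧ a m = a n) :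
    0 < interf h P a n (a n) := by
  obtain ⟨m, hmn, ham⟩ := hn
  exact sum_pos' (fun i _ => mul_nonneg (sq_nonneg _) (hP i).le)
    ⟨m, by simp [hmn, ham], mul_pos (pow_pos (norm_pos_iff.2 (hh m n _)) 2) (hP m)⟩

lemma interf_update_self_eq_zero {a : Fin N → Fin N} {n k : Fin N}
    (hk : ∀ m, m ≠ n → a m ≠ k) : interf h P (Function.update a n k) n k = 0 :=
  sum_eq_zero fun m hm => by
    obtain ⟨-, hmn, hmk⟩ := mem_filter.1 hm
    exact absurd (by rwa [Function.update_of_ne hmn] at hmk) (hk m hmn)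

lemma mfsigUtil_le (hP : ∀ n, 0 ≤ P n) (hN0 : 0 ≤ N0) (M : ℕ) (a : Fin N → Fin N)
    (n : Fin N) :
    mfsigUtil h P N0 M a n ≤ Real.logb 2 (1 + P n *
      orderStat (fun k => ‖h n n k‖) (N - M + 1) ^ 2 / (N0 + interf h P a n (a n))) := by
  unfold mfsigUtil
  split_ifs
  · exact le_rfl
  · refine Real.logb_nonneg one_lt_two (le_add_of_nonneg_right ?_)
    exact div_nonneg (mul_nonneg (hP n) (sq_nonneg _))
      (add_nonneg hN0 (interf_nonneg h hP a n (a n)))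

lemma mfsigUtil_update_self {M : ℕ} {a : Fin N → Fin N} {n k : Fin N}
    (hk : orderStat (fun k => ‖h n n k‖) (N - M + 1) ≤ ‖h n n k‖)
    (hfree : ∀ m, m ≠ n → a m ≠ k) :
    mfsigUtil h P N0 M (Function.update a n k) n =
      Real.logb 2 (1 + P n * orderStat (fun k => ‖h n n k‖) (N - M + 1) ^ 2 / N0) := by
  rw [mfsigUtil, Function.update_self, if_pos hk, interf_update_self_eq_zero h hfree, add_zero]

lemma IsPNE.exists_ne_eq_of_sharing (hh : ∀ m n k, h m n k ≠ 0) (hP : ∀ n, 0 < P n)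
    (hN0 : 0 < N0) {M : ℕ} (hM : 0 < M) {b : Fin N → Fin N}
    (hb : IsPNE (fun a n => mfsigUtil h P N0 M a n) b) {n : Fin N}
    (hn : ∃ m, m ≠ n ∧ b m = b n) {k : Fin N}
    (hk : orderStat (fun k => ‖h n n k‖) (N - M + 1) ≤ ‖h n n k‖) :
    ∃ m, m ≠ n ∧ b m = k := by
  by_contra! hfree
  have hσ : 0 < orderStat (fun k => ‖h n n k‖) (N - M + 1) := by
    obtain ⟨k', hk'⟩ := exists_orderStat_eq (fun k => ‖h n n k‖) (j := N - M + 1) (by omega)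
    exact hk' ▸ norm_pos_iff.2 (hh n n k')
  set σ := orderStat (fun k => ‖h n n k‖) (N - M + 1)
  have hI := interf_pos_of_sharing h hh hP hn
  have hgain : Real.logb 2 (1 + P n * σ ^ 2 / (N0 + interf h P b n (b n))) <
      Real.logb 2 (1 + P n * σ ^ 2 / N0) := by
    have hPσ : 0 < P n * σ ^ 2 := by have := hP n; positivity
    refine Real.logb_lt_logb one_lt_two ?_ ?_
    · exact add_pos_of_pos_of_nonneg one_pos (div_nonneg hPσ.le (by linarith))
    · gcongr
      linarith
  have := hb n k
  dsimp only at this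
  rw [mfsigUtil_update_self h hk hfree] at this
  linarith [mfsigUtil_le h (fun n => (hP n).le) hN0.le M b n]

end Game

lemma IsPNE.exists_lowOutsideOrManyAbove {N : ℕ} {h : Fin N → Fin N → Fin N → ℂ}
    (hh : ∀ m n k, h m n k ≠ 0) {P : Fin N → ℝ} (hP : ∀ n, 0 < P n) {N0 : ℝ} (hN0 : 0 < N0)
    {M : ℕ} (hM : 0 < M) (t : Fin N → ℝ) {r : ℝ} {b : Fin N → Fin N}
    (hb : IsPNE (fun a n => mfsigUtil h P N0 M a n) b) (hr : r * N ≤ numSharing b) :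
    ∃ O : Finset (Fin N), r * N / 2 ≤ #Oᶜ ∧ ∃ U ∈ powersetCard ⌈r * N⌉₊ univ,
      ∀ n ∈ U, (fun k => ‖h n n k‖) ∈ lowOutsideOrManyAbove O (t n) (min M N) := by
  have hfree : (numSharing b : ℝ) ≤ 2 * #(univ.image b)ᶜ := by
    exact_mod_cast numSharing_le_two_mul_card_compl_image b
  obtain ⟨U, hU, hUcard⟩ := exists_subset_card_eq (s := {n | ∃ m, m ≠ n ∧ b m = b n})
    (Nat.ceil_le.2 hr)
  refine ⟨univ.image b, by linarith, U, mem_powersetCard.2 ⟨subset_univ U, hUcard⟩,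
    fun n hn => ?_⟩
  have hN : 0 < N := n.pos
  have hmin : N + 1 - (N - M + 1) = min M N := by omega
  rw [← hmin]
  refine mem_lowOutsideOrManyAbove_of_orderStat le_add_self (by omega) (fun k hk => ?_) (t n)
  obtain ⟨m, -, hm⟩ := hb.exists_ne_eq_of_sharing h hh hP hN0 hM (mem_filter.1 (hU hn)).2 hk
  exact mem_image.2 ⟨m, mem_univ m, hm⟩

namespace MDepChannel

variable {Ω : Type*} [MeasurableSpace Ω] {μ : Measure Ω} {m N : ℕ}
  {h : Fin N → Fin N → Fin N → Ω → ℂ}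

lemma ae_ne_zero (hch : MDepChannel μ m h) : ∀ᵐ ω ∂μ, ∀ m n k, h m n k ω ≠ 0 := by
  simpa only [ae_all_iff] using hch.nonzero

lemma iIndepFun_norm_diag (hch : MDepChannel μ m h) :
    iIndepFun (fun n ω k => ‖h n n k ω‖) μ :=
  (hch.indepPairs.precomp (g := fun n => (n, n)) fun _ _ hn => (Prod.mk.inj hn).1).comp
    (fun _ v k => ‖v k‖) fun _ => measurable_pi_lambda _ fun k => (measurable_pi_apply k).norm

lemma exists_cdfOf_norm_diag_eq [IsProbabilityMeasure μ] (hch : MDepChannel μ m h) (hN : 0 < N)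
    (hcont : ∀ n k, Continuous (cdfOf μ fun ω => ‖h n n k ω‖)) {y : ℝ} (hy0 : 0 ≤ y)
    (hy1 : y < 1) : ∃ t : Fin N → ℝ, ∀ n k, cdfOf μ (fun ω => ‖h n n k ω‖) (t n) = y := by
  set k0 : Fin N := ⟨0, hN⟩
  choose t ht using fun n =>
    exists_cdfOf_eq (fun ω => norm_nonneg (h n n k0 ω)) (hcont n k0) hy0 hy1
  refine ⟨t, fun n k => ?_⟩
  exact (congrFun ((hch.ident n n k k0).comp continuous_norm.measurable).cdfOf_eq _).trans (ht n)

lemma measure_preimage_lowOutsideOrManyAbove_le [IsProbabilityMeasure μ]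
    (hch : MDepChannel μ m h) {M : ℕ} (hM : 0 < M)
    {c r : ℝ} (hc : 0 < c) (hcN : c ≤ N) {t : Fin N → ℝ}
    (ht : ∀ n k, cdfOf μ (fun ω => ‖h n n k ω‖) (t n) = 1 - c / N) {O : Finset (Fin N)}
    (hO : r * N / 2 ≤ #Oᶜ) (n : Fin N) :
    μ ((fun ω k => ‖h n n k ω‖) ⁻¹' lowOutsideOrManyAbove O (t n) (min M N)) ≤
      ENNReal.ofReal (Real.exp (-(c * r / (2 * (m + 1)))) + c / min M N) := by
  have hN : (0 : ℝ) < N := hc.trans_le hcN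
  have hθ0 : 0 ≤ c / N := by positivity
  have hY := (hch.mdep n n).comp continuous_norm.measurable
  refine (hY.measure_preimage_lowOutsideOrManyAbove_le (fun k => (hch.meas n n k).norm) hθ0
    (div_le_one_of_le₀ hcN hN.le) (ht n) O (lt_min hM (by exact_mod_cast hN))).trans
    (ENNReal.ofReal_le_ofReal ?_)
  rw [mul_div_cancel₀ c hN.ne']
  gcongr Real.exp (-?_) + _
  calc c * r / (2 * (m + 1)) = c / N * (r * N / 2) / (m + 1) := by field_simp
    _ ≤ c / N * #Oᶜ / (m + 1) := by gcongr

end MDepChannel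

theorem measure_exists_isPNE_le_numSharing_le {Ω : Type*} [MeasurableSpace Ω] {μ : Measure Ω}
    [IsProbabilityMeasure μ] {m N : ℕ} {h : Fin N → Fin N → Fin N → Ω → ℂ}
    (hch : MDepChannel μ m h) (hcont : ∀ n k, Continuous (cdfOf μ fun ω => ‖h n n k ω‖))
    {P : Fin N → ℝ} (hP : ∀ n, 0 < P n) {N0 : ℝ} (hN0 : 0 < N0) {M : ℕ} (hM : 0 < M)
    {r c : ℝ} (hc : 0 < c) (hcN : c ≤ N) :
    μ {ω | ∃ b : Fin N → Fin N,
        IsPNE (fun a n => mfsigUtil (fun m' n' k => h m' n' k ω) P N0 M a n) b ∧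
        r * N ≤ (numSharing b : ℝ)} ≤
      ENNReal.ofReal (4 ^ N * (Real.exp (-(c * r / (2 * (m + 1)))) + c / min M N) ^ ⌈r * N⌉₊) := by
  have hN : (0 : ℝ) < N := hc.trans_le hcN
  obtain ⟨t, ht⟩ := hch.exists_cdfOf_norm_diag_eq (by exact_mod_cast hN) hcont
    (sub_nonneg.2 (div_le_one_of_le₀ hcN hN.le)) (sub_lt_self 1 (div_pos hc hN))
  set k := ⌈r * N⌉₊
  set p := Real.exp (-(c * r / (2 * (m + 1)))) + c / min M N
  set 𝒪 : Finset (Finset (Fin N)) := {O | r * N / 2 ≤ #Oᶜ}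
  calc _ ≤ μ (⋃ O ∈ 𝒪, ⋃ U ∈ powersetCard k univ,
          ⋂ n ∈ U, (fun ω k => ‖h n n k ω‖) ⁻¹' lowOutsideOrManyAbove O (t n) (min M N)) := by
        refine measure_mono_ae ?_
        filter_upwards [hch.ae_ne_zero] with ω hω ⟨b, hb, hr⟩
        obtain ⟨O, hO, U, hU, hUb⟩ := hb.exists_lowOutsideOrManyAbove hω hP hN0 hM t hr
        exact Set.mem_iUnion₂.2 ⟨O, mem_filter.2 ⟨mem_univ _, hO⟩,
          Set.mem_iUnion₂.2 ⟨U, hU, Set.mem_iInter₂.2 hUb⟩⟩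
    _ ≤ ∑ O ∈ 𝒪, μ (⋃ U ∈ powersetCard k univ,
          ⋂ n ∈ U, (fun ω k => ‖h n n k ω‖) ⁻¹' lowOutsideOrManyAbove O (t n) (min M N)) :=
        measure_biUnion_finset_le _ _
    _ ≤ ∑ O ∈ 𝒪, N.choose k * ENNReal.ofReal p ^ k := sum_le_sum fun O hO => by
        simpa only [Fintype.card_fin] using
          measure_biUnion_powersetCard_biInter_le hch.iIndepFun_norm_diag
          (fun n => measurableSet_lowOutsideOrManyAbove _ _ _)
          (fun n => hch.measure_preimage_lowOutsideOrManyAbove_le hM hc hcN ht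
            (mem_filter.1 hO).2 n) k
    _ ≤ 2 ^ N * (2 ^ N * ENNReal.ofReal p ^ k) := by
        rw [sum_const, nsmul_eq_mul]
        gcongr
        · calc (#𝒪 : ℝ≥0∞) ≤ #(univ : Finset (Finset (Fin N))) := by exact_mod_cast card_le_univ 𝒪
            _ = 2 ^ N := by simp
        · exact_mod_cast Nat.choose_le_two_pow N k
    _ = ENNReal.ofReal (4 ^ N * p ^ k) := by
        have hp : 0 ≤ p := add_nonneg (Real.exp_pos _).le (by positivity)
        rw [ENNReal.ofReal_mul (by positivity), ENNReal.ofReal_pow hp, ← mul_assoc, ← mul_pow]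
        norm_num

lemma four_pow_mul_pow_ceil_le {r p : ℝ} (hr : 0 < r) (hp0 : 0 ≤ p)
    (hp : p ≤ Real.exp (-(2 / r))) (N : ℕ) :
    4 ^ N * p ^ ⌈r * N⌉₊ ≤ (4 * Real.exp (-2)) ^ N := by
  have hk : 2 * (N : ℝ) ≤ 2 / r * ⌈r * N⌉₊ := by
    rw [div_mul_eq_mul_div, le_div_iff₀ hr, mul_assoc, mul_comm (N : ℝ)]
    gcongr
    exact Nat.le_ceil _
  calc 4 ^ N * p ^ ⌈r * N⌉₊ ≤ 4 ^ N * Real.exp (-(2 / r)) ^ ⌈r * N⌉₊ := by gcongr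
    _ = 4 ^ N * Real.exp (-(2 / r * ⌈r * N⌉₊)) := by rw [← Real.exp_nat_mul]; ring_nf
    _ ≤ 4 ^ N * Real.exp (-2) ^ N := by
        rw [← Real.exp_nat_mul]
        gcongr
        linarith
    _ = (4 * Real.exp (-2)) ^ N := (mul_pow _ _ _).symm

lemma four_mul_exp_neg_two_lt_one : 4 * Real.exp (-2) < 1 := by
  have h2 : 2 < Real.exp 1 := by linarith [Real.add_one_lt_exp one_ne_zero]
  have : 4 < Real.exp 2 := by
    rw [show (2 : ℝ) = 1 + 1 by norm_num, Real.exp_add]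
    nlinarith
  rwa [Real.exp_neg, ← div_eq_mul_inv, div_lt_one (Real.exp_pos 2)]

theorem measure_exists_isPNE_le_four_mul_exp_neg_two_pow {Ω : Type*} [MeasurableSpace Ω]
    {μ : Measure Ω} [IsProbabilityMeasure μ] {m N : ℕ} {h : Fin N → Fin N → Fin N → Ω → ℂ}
    (hch : MDepChannel μ m h) (hcont : ∀ n k, Continuous (cdfOf μ fun ω => ‖h n n k ω‖))
    {P : Fin N → ℝ} (hP : ∀ n, 0 < P n) {N0 : ℝ} (hN0 : 0 < N0) {M : ℕ} {r c : ℝ} (hr : 0 < r)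
    (hc : 0 < c) (hcN : c ≤ N)
    (hexp : Real.exp (-(c * r / (2 * (m + 1)))) ≤ Real.exp (-(2 / r)) / 2)
    (hMN : 2 * c / Real.exp (-(2 / r)) ≤ min M N) :
    μ {ω | ∃ b : Fin N → Fin N,
        IsPNE (fun a n => mfsigUtil (fun m' n' k => h m' n' k ω) P N0 M a n) b ∧
        r * N ≤ (numSharing b : ℝ)} ≤ ENNReal.ofReal ((4 * Real.exp (-2)) ^ N) := by
  have hδ := Real.exp_pos (-(2 / r))
  have hmin : (0 : ℝ) < min M N := (div_pos (mul_pos two_pos hc) hδ).trans_le hMN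
  have hM : 0 < M := (lt_min_iff.1 (Nat.cast_pos.1 hmin)).1
  have hcmin : c / min M N ≤ Real.exp (-(2 / r)) / 2 := by
    rw [div_le_iff₀ hmin]
    rw [div_le_iff₀ hδ] at hMN
    linarith
  exact (measure_exists_isPNE_le_numSharing_le hch hcont hP hN0 hM hc hcN).trans
    (ENNReal.ofReal_le_ofReal (four_pow_mul_pow_ceil_le hr (by positivity) (by linarith) N))

theorem stmt_6_general (m : ℕ) (ε : ℝ) (hε : 0 < ε)
    (Ω : ℕ → Type) (inst : ∀ N, MeasurableSpace (Ω N))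
    (μ : ∀ N, Measure (Ω N)) (hprob : ∀ N, IsProbabilityMeasure (μ N))
    (h : ∀ N, Fin N → Fin N → Fin N → Ω N → ℂ)
    (hch : ∀ N, MDepChannel (μ N) m (h N))
    (hcont : ∀ N (n k : Fin N),
      Continuous (cdfOf (μ N) (fun ω => ‖h N n n k ω‖)))
    (P : ∀ N, Fin N → ℝ) (hP : ∀ N n, 0 < P N n)
    (N0 : ℝ) (hN0 : 0 < N0)
    (M : ℕ → ℕ)
    (hM : ∀ N : ℕ, ((m : ℝ) + 1) * (Real.exp 1 + ε) * Real.log N ≤ M N)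
    (r : ℝ) (hr : 0 < r) :
    Tendsto (fun N => μ N {ω | ∃ b : Fin N → Fin N,
        IsPNE (fun c n => mfsigUtil (fun m' n' k => h N m' n' k ω) (P N) N0 (M N) c n) b ∧
        r * N ≤ (numSharing b : ℝ)})
      atTop (nhds 0) := by
  have hMtop : Tendsto (fun N => (M N : ℝ)) atTop atTop :=
    tendsto_atTop_mono hM <|
      (Real.tendsto_log_atTop.comp tendsto_natCast_atTop_atTop).const_mul_atTop (by positivity)
  obtain ⟨c, hc, hexp⟩ : ∃ c > 0,
      Real.exp (-(c * r / (2 * (m + 1)))) = Real.exp (-(2 / r)) / 2 := by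
    refine ⟨2 * (m + 1) * (2 / r + Real.log 2) / r, by positivity, ?_⟩
    rw [show 2 * (m + 1) * (2 / r + Real.log 2) / r * r / (2 * (m + 1)) = 2 / r + Real.log 2 by
      field_simp, neg_add, Real.exp_add, Real.exp_neg (Real.log 2), Real.exp_log two_pos]
    ring
  have hbound : ∀ᶠ N : ℕ in atTop, μ N {ω | ∃ b : Fin N → Fin N,
      IsPNE (fun c n => mfsigUtil (fun m' n' k => h N m' n' k ω) (P N) N0 (M N) c n) b ∧
      r * N ≤ (numSharing b : ℝ)} ≤ ENNReal.ofReal ((4 * Real.exp (-2)) ^ N) := by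
    filter_upwards [hMtop.eventually_ge_atTop (2 * c / Real.exp (-(2 / r))),
      tendsto_natCast_atTop_atTop.eventually_ge_atTop (2 * c / Real.exp (-(2 / r))),
      tendsto_natCast_atTop_atTop.eventually_ge_atTop c] with N hMN hN hcN
    exact measure_exists_isPNE_le_four_mul_exp_neg_two_pow (hch N) (hcont N) (hP N) hN0 hr hc
      hcN hexp.le (by push_cast; exact le_min hMN hN)
  have hlim : Tendsto (fun N : ℕ => ENNReal.ofReal ((4 * Real.exp (-2)) ^ N)) atTop (nhds 0) := by
    simpa using ENNReal.tendsto_ofReal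
      (tendsto_pow_atTop_nhds_zero_of_lt_one (by positivity) four_mul_exp_neg_two_lt_one)
  exact tendsto_of_tendsto_of_tendsto_of_le_of_le' tendsto_const_nhds hlim
    (Eventually.of_forall fun _ => zero_le) hbound

/-- for an `m`-dependent frequency-selective channel with continuous unbounded
direct-gain distributions and `M ≥ (m+1)(e+ε) ln N`, for every `r > 0` the probability that
the M-FSIG has a pure Nash equilibrium with at least `rN` sharing users tends to `0`. -/
theorem stmt_6 (m : ℕ) (ε : ℝ) (hε : 0 < ε)
    (Ω : ℕ → Type) (inst : ∀ N, MeasurableSpace (Ω N))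
    (μ : ∀ N, Measure (Ω N)) (hprob : ∀ N, IsProbabilityMeasure (μ N))
    (h : ∀ N, Fin N → Fin N → Fin N → Ω N → ℂ)
    (hch : ∀ N, MDepChannel (μ N) m (h N))
    (hcont : ∀ N (n k : Fin N),
      Continuous (cdfOf (μ N) (fun ω => ‖h N n n k ω‖)))
    (hunb : ∀ N (n k : Fin N), ∀ x : ℝ,
      cdfOf (μ N) (fun ω => ‖h N n n k ω‖) x < 1)
    (P : ∀ N, Fin N → ℝ) (hP : ∀ N n, 0 < P N n)
    (N0 : ℝ) (hN0 : 0 < N0)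
    (M : ℕ → ℕ)
    (hM : ∀ N : ℕ, ((m : ℝ) + 1) * (Real.exp 1 + ε) * Real.log N ≤ M N)
    (r : ℝ) (hr : 0 < r) :
    Tendsto (fun N => μ N {ω | ∃ b : Fin N → Fin N,
        IsPNE (fun c n => mfsigUtil (fun m' n' k => h N m' n' k ω) (P N) N0 (M N) c n) b ∧
        r * N ≤ (numSharing b : ℝ)})
      atTop (nhds 0) :=
  stmt_6_general m ε hε Ω inst μ hprob h hch hcont P hP N0 hN0 M hM r hr
end

section
/- Let X be a random variable with an exponentially-dominated tail distribution with parameters (α, β, λ, γ), and let M_K be a sequence of reals with M_K ≥ 1 such that M_K/ln^μ K → 0 for some μ > 0 (in particular M_K/K → 0). Then lim_{K→∞} q̄_X(M_K/K) / q̄_X(1/K) = 1, where q̄_X is the tail quantile function of X. -/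
open MeasureTheory ProbabilityTheory Filter

/-- Tail quantile function `q̄_F(p) = min {x | F x ≥ 1 - p}` (as an infimum). -/
noncomputable def tailQuantile (F : ℝ → ℝ) (p : ℝ) : ℝ := sInf {x | 1 - p ≤ F x}

/-!
Taking logarithms in the tail asymptotics gives `-log (1 - F x) ~ lam * x ^ γ` as `x → ∞`.
Since `F` is continuous, `F (q̄ p) = 1 - p` for small `p`, and `q̄ p → ∞` as `p → 0⁺`, so
`lam * (q̄ p) ^ γ ~ -log p`. As `log M_K = O(log log K) = o(log K)`, we get
`-log (M_K / K) ~ log K = -log (1 / K)`, hence `q̄ (M_K / K) ^ γ ~ q̄ (1 / K) ^ γ`, and taking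
`γ`-th roots gives the claim.
-/

open Real Asymptotics Topology

lemma monotone_cdfOf {Ω : Type*} [MeasurableSpace Ω] (μ : Measure Ω) [IsFiniteMeasure μ]
    (X : Ω → ℝ) : Monotone (cdfOf μ X) := fun _ _ hxy =>
  ENNReal.toReal_mono (measure_ne_top μ _) (measure_mono fun _ hω => le_trans hω hxy)

lemma tendsto_nhdsGT_zero_of_tendsto_neg_log {ι : Type*} {l : Filter ι} {a : ι → ℝ}
    (hpos : ∀ᶠ i in l, 0 < a i) (h : Tendsto (fun i => -log (a i)) l atTop) :
    Tendsto a l (𝓝[>] 0) := by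
  refine (tendsto_exp_atBot_nhdsGT.comp (tendsto_neg_atTop_atBot.comp h)).congr' ?_
  filter_upwards [hpos] with i hi
  simp [exp_log hi]

section tailQuantile

variable {F : ℝ → ℝ}

lemma nonempty_setOf_one_sub_le (htop : Tendsto F atTop (𝓝 1)) {p : ℝ} (hp : 0 < p) :
    {x | 1 - p ≤ F x}.Nonempty :=
  (htop.eventually (eventually_ge_nhds (by linarith))).exists

lemma setOf_one_sub_le_subset_Ioi (hmono : Monotone F) {p N : ℝ} (hN : F N < 1 - p) :
    {x | 1 - p ≤ F x} ⊆ Set.Ioi N :=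
  fun _ hx => lt_of_not_ge fun hxN => (hN.trans_le hx).not_ge (hmono hxN)

lemma tendsto_tailQuantile_atTop (hmono : Monotone F) (hlt : ∀ x, F x < 1)
    (htop : Tendsto F atTop (𝓝 1)) : Tendsto (tailQuantile F) (𝓝[>] 0) atTop := by
  refine tendsto_atTop.mpr fun N => ?_
  filter_upwards [nhdsWithin_le_nhds (eventually_lt_nhds (sub_pos.mpr (hlt N))),
    self_mem_nhdsWithin] with p hpN hp
  exact le_csInf (nonempty_setOf_one_sub_le htop hp) fun y hy =>
    (setOf_one_sub_le_subset_Ioi hmono (by linarith) hy).le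

lemma eventually_map_tailQuantile (hmono : Monotone F) (hcont : Continuous F)
    (hlt : ∀ x, F x < 1) (htop : Tendsto F atTop (𝓝 1)) :
    ∀ᶠ p in 𝓝[>] 0, F (tailQuantile F p) = 1 - p := by
  filter_upwards [nhdsWithin_le_nhds (eventually_lt_nhds (sub_pos.mpr (hlt 0))),
    self_mem_nhdsWithin] with p hp0 hp
  have hbdd : BddBelow {x | 1 - p ≤ F x} :=
    ⟨0, fun x hx => (setOf_one_sub_le_subset_Ioi hmono (by linarith) hx).le⟩
  refine le_antisymm ?_ ((isClosed_le continuous_const hcont).csInf_mem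
    (nonempty_setOf_one_sub_le htop hp) hbdd)
  refine le_of_tendsto (x := 𝓝[<] tailQuantile F p)
    ((hcont.tendsto _).mono_left nhdsWithin_le_nhds) ?_
  filter_upwards [self_mem_nhdsWithin] with x hx
  exact (not_le.mp (notMem_of_lt_csInf (s := {x | 1 - p ≤ F x}) hx hbdd)).le

end tailQuantile

namespace ExpDomTail

variable {F : ℝ → ℝ} {α β lam γ : ℝ}

lemma eventually_one_sub_pos (h : ExpDomTail F α β lam γ) (hα : 0 < α) :
    ∀ᶠ x in atTop, 0 < 1 - F x := by
  filter_upwards [h.eventually (eventually_gt_nhds one_pos), eventually_gt_atTop 0] with x hx hx0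
  exact (div_pos_iff_of_pos_right (by positivity)).mp hx

lemma lt_one (h : ExpDomTail F α β lam γ) (hα : 0 < α) (hmono : Monotone F) (x : ℝ) :
    F x < 1 := by
  obtain ⟨y, hy, hxy⟩ := ((h.eventually_one_sub_pos hα).and (eventually_ge_atTop x)).exists
  linarith [hmono hxy]

lemma isEquivalent_neg_log_one_sub (h : ExpDomTail F α β lam γ) (hα : 0 < α) (hlam : 0 < lam)
    (hγ : 0 < γ) : (fun x => -log (1 - F x)) ~[atTop] fun x => lam * x ^ γ := by
  set r := fun x => (1 - F x) / (α * x ^ β * exp (-lam * x ^ γ))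
  have hr : Tendsto (fun x => log (r x)) atTop (𝓝 0) := by
    have := (continuousAt_log one_ne_zero).tendsto.comp h
    rwa [log_one] at this
  have hxγ : Tendsto (fun x : ℝ => ‖x ^ γ‖) atTop atTop :=
    tendsto_norm_atTop_atTop.comp (tendsto_rpow_atTop hγ)
  have hrem : (fun x => log (r x) + log α + β * log x) =o[atTop] fun x => x ^ γ :=
    (((hr.isBigO_one ℝ).trans_isLittleO ((isLittleO_one_left_iff ℝ).mpr hxγ)).add
      (isLittleO_const_left.mpr (Or.inr hxγ))).add
      ((isLittleO_log_rpow_atTop hγ).const_mul_left β)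
  rw [← isLittleO_const_mul_right_iff hlam.ne'] at hrem
  refine IsLittleO.isEquivalent (hrem.neg_left.congr' ?_ EventuallyEq.rfl)
  filter_upwards [eventually_gt_atTop 0, h.eventually_one_sub_pos hα] with x hx hF
  have hD : 0 < α * x ^ β * exp (-lam * x ^ γ) := by positivity
  simp only [r, Pi.sub_apply]
  rw [log_div hF.ne' hD.ne', log_mul (by positivity) (exp_pos _).ne',
    log_mul hα.ne' (by positivity), log_exp, log_rpow hx]
  ring

lemma tendsto_atTop (h : ExpDomTail F α β lam γ) (hα : 0 < α) (hlam : 0 < lam) (hγ : 0 < γ) :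
    Tendsto F atTop (𝓝 1) := by
  have hsub : Tendsto (fun x => 1 - F x) atTop (𝓝 0) :=
    (tendsto_nhdsGT_zero_of_tendsto_neg_log (h.eventually_one_sub_pos hα)
      ((h.isEquivalent_neg_log_one_sub hα hlam hγ).symm.tendsto_atTop
        ((tendsto_rpow_atTop hγ).const_mul_atTop hlam))).mono_right nhdsWithin_le_nhds
  simpa using (tendsto_const_nhds (x := (1 : ℝ))).sub hsub

lemma isEquivalent_tailQuantile (h : ExpDomTail F α β lam γ) (hα : 0 < α) (hlam : 0 < lam)
    (hγ : 0 < γ) (hmono : Monotone F) (hcont : Continuous F) :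
    (fun p => lam * tailQuantile F p ^ γ) ~[𝓝[>] 0] fun p => -log p := by
  have hlt := h.lt_one hα hmono
  have htop := h.tendsto_atTop hα hlam hγ
  refine ((h.isEquivalent_neg_log_one_sub hα hlam hγ).comp_tendsto
    (tendsto_tailQuantile_atTop hmono hlt htop)).symm.congr_right ?_
  filter_upwards [eventually_map_tailQuantile hmono hcont hlt htop] with p hp
  simp [hp]

end ExpDomTail

lemma isLittleO_log_of_tendsto_div_rpow {ι : Type*} {l : Filter ι} {m n : ι → ℝ} {t : ℝ}
    (hm : ∀ i, 1 ≤ m i) (hn : Tendsto n l atTop)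
    (hmn : Tendsto (fun i => m i / n i ^ t) l (𝓝 0)) :
    (fun i => log (m i)) =o[l] n := by
  refine IsBigO.trans_isLittleO ?_ (isLittleO_log_id_atTop.comp_tendsto hn)
  refine IsBigO.of_bound |t| ?_
  filter_upwards [hmn.eventually (eventually_lt_nhds one_pos),
    hn.eventually (eventually_gt_atTop 0)] with i hlt hpos
  have hle : m i ≤ n i ^ t := (div_lt_one (rpow_pos_of_pos hpos t)).mp hlt |>.le
  have hlog : log (m i) ≤ t * log (n i) := by
    simpa [log_rpow hpos] using log_le_log (one_pos.trans_le (hm i)) hle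
  rw [Real.norm_of_nonneg (log_nonneg (hm i)), Function.comp_apply, Real.norm_eq_abs,
    ← abs_mul]
  exact hlog.trans (le_abs_self _)

lemma isEquivalent_neg_log_div_natCast {M : ℕ → ℝ} (hM : ∀ K, 0 < M K)
    (hlog : (fun K => log (M K)) =o[atTop] fun K : ℕ => log K) :
    (fun K : ℕ => -log (M K / K)) ~[atTop] fun K => -log (1 / K) := by
  refine IsLittleO.isEquivalent (hlog.neg_left.congr' ?_ ?_)
  · filter_upwards [eventually_gt_atTop 0] with K hK
    rw [Pi.sub_apply, log_div (hM K).ne' (Nat.cast_pos.mpr hK).ne', one_div, log_inv]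
    ring
  · simp

lemma tendsto_div_of_isEquivalent_neg_log {ι : Type*} {l : Filter ι} {q : ℝ → ℝ} {lam γ : ℝ}
    (hlam : 0 < lam) (hγ : 0 < γ) (hqtop : Tendsto q (𝓝[>] 0) atTop)
    (hq : (fun p => lam * q p ^ γ) ~[𝓝[>] 0] fun p => -log p) {a b : ι → ℝ}
    (ha : Tendsto a l (𝓝[>] 0)) (hb : Tendsto b l (𝓝[>] 0))
    (hab : (fun i => -log (a i)) ~[l] fun i => -log (b i)) :
    Tendsto (fun i => q (a i) / q (b i)) l (𝓝 1) := by
  have hequiv : (fun i => lam * q (a i) ^ γ) ~[l] fun i => lam * q (b i) ^ γ :=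
    ((hq.comp_tendsto ha).trans hab).trans (hq.comp_tendsto hb).symm
  have hqa := (hqtop.comp ha).eventually_gt_atTop 0
  have hqb := (hqtop.comp hb).eventually_gt_atTop 0
  have hpow : Tendsto (fun i => (q (a i) / q (b i)) ^ γ) l (𝓝 1) := by
    refine ((isEquivalent_iff_tendsto_one ?_).mp hequiv).congr' ?_
    · filter_upwards [hqb] with i hi
      positivity
    · filter_upwards [hqa, hqb] with i hai hbi
      simp only [Function.comp_apply, Pi.div_apply] at hai hbi ⊢
      rw [mul_div_mul_left _ _ hlam.ne', div_rpow hai.le hbi.le]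
  have hroot := hpow.rpow_const (p := γ⁻¹) (Or.inl one_ne_zero)
  rw [one_rpow] at hroot
  refine hroot.congr' ?_
  filter_upwards [hqa, hqb] with i hai hbi
  simp only [Function.comp_apply] at hai hbi
  rw [← rpow_mul (div_nonneg hai.le hbi.le), mul_inv_cancel₀ hγ.ne', rpow_one]

theorem stmt_15_general {Ω : Type*} [MeasurableSpace Ω] (μ : Measure Ω) [IsProbabilityMeasure μ]
    (X : Ω → ℝ)
    (F : ℝ → ℝ) (hFdef : F = cdfOf μ X) (hFcont : Continuous F)
    (α β lam γ : ℝ) (hα : 0 < α) (hlam : 0 < lam) (hγ : 0 < γ)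
    (htail : ExpDomTail F α β lam γ)
    (M : ℕ → ℝ) (hM1 : ∀ K, 1 ≤ M K)
    (t : ℝ)
    (hM : Tendsto (fun K : ℕ => M K / (Real.log K) ^ t) atTop (nhds 0)) :
    Tendsto (fun K : ℕ => tailQuantile F (M K / K) / tailQuantile F (1 / K)) atTop (nhds 1) := by
  have hmono : Monotone F := hFdef ▸ monotone_cdfOf μ X
  have hK : ∀ᶠ K : ℕ in atTop, (0 : ℝ) < K := tendsto_natCast_atTop_atTop.eventually_gt_atTop 0
  have hlogK : Tendsto (fun K : ℕ => log K) atTop atTop :=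
    tendsto_log_atTop.comp tendsto_natCast_atTop_atTop
  have hab := isEquivalent_neg_log_div_natCast (fun K => one_pos.trans_le (hM1 K))
    (isLittleO_log_of_tendsto_div_rpow hM1 hlogK hM)
  have hb : Tendsto (fun K : ℕ => -log (1 / K)) atTop atTop := by simpa using hlogK
  exact tendsto_div_of_isEquivalent_neg_log hlam hγ
    (tendsto_tailQuantile_atTop hmono (htail.lt_one hα hmono) (htail.tendsto_atTop hα hlam hγ))
    (htail.isEquivalent_tailQuantile hα hlam hγ hmono hFcont)
    (tendsto_nhdsGT_zero_of_tendsto_neg_log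
      (hK.mono fun K hK => div_pos (one_pos.trans_le (hM1 K)) hK)
      (hab.symm.tendsto_atTop hb))
    (tendsto_nhdsGT_zero_of_tendsto_neg_log (hK.mono fun _ => one_div_pos.mpr) hb) hab

/-- for a random variable with an exponentially-dominated tail (continuous CDF)
and `M_K ≥ 1` with `M_K / ln^μ K → 0` for some `μ > 0`, one has
`q̄_X(M_K/K) / q̄_X(1/K) → 1` as `K → ∞`. -/
theorem stmt_15 {Ω : Type*} [MeasurableSpace Ω] (μ : Measure Ω) [IsProbabilityMeasure μ]
    (X : Ω → ℝ) (hXmeas : Measurable X)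
    (F : ℝ → ℝ) (hFdef : F = cdfOf μ X) (hFcont : Continuous F)
    (α β lam γ : ℝ) (hα : 0 < α) (hlam : 0 < lam) (hγ : 0 < γ)
    (htail : ExpDomTail F α β lam γ)
    (M : ℕ → ℝ) (hM1 : ∀ K, 1 ≤ M K)
    (t : ℝ) (ht : 0 < t)
    (hM : Tendsto (fun K : ℕ => M K / (Real.log K) ^ t) atTop (nhds 0)) :
    Tendsto (fun K : ℕ => tailQuantile F (M K / K) / tailQuantile F (1 / K)) atTop (nhds 1) :=
  stmt_15_general μ X F hFdef hFcont α β lam γ hα hlam hγ htail M hM1 t hM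
end

section
/- Let X be a random variable with an exponentially-dominated tail distribution with parameters (α, β, λ, γ), and let M_K be a sequence of reals with M_K ≥ 1 such that M_K/K^μ → 0 for some μ < 1. Then liminf_{K→∞} q̄_X(M_K/K) / q̄_X(1/K²) > 0, where q̄_X is the tail quantile function of X. -/
open MeasureTheory ProbabilityTheory Filter

/-!
With `L = log u`, the tail asymptotics give `log (1 - F x) / L → -c` at the point
`x = (c L / lam) ^ (1 / γ)`. Taking `u = K`, the level `M_K / K ≤ K^(t-1)` therefore has its
quantile above the point for `c = (1 - t) / 2`, while the level `K^(-2)` has its quantile below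
the point for `c = 3`. The quantile ratio is thus at least the ratio of the two points, which is
the constant `((1 - t) / 6) ^ (1 / γ)`, and at most `1` because the levels are ordered.
-/

open Real

section TailQuantile

variable {F : ℝ → ℝ} {p q x y : ℝ}

lemma le_tailQuantile (hF : Monotone F) (htop : Tendsto F atTop (nhds 1)) (hp : 0 < p)
    (hx : F x < 1 - p) : x ≤ tailQuantile F p := by
  obtain ⟨w, hw⟩ := (htop.eventually (eventually_gt_nhds (by linarith : 1 - p < 1))).exists
  exact le_csInf ⟨w, hw.le⟩ fun y hy => (hF.reflect_lt (hx.trans_le hy)).le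

lemma tailQuantile_le (hF : Monotone F) (hbot : Tendsto F atBot (nhds 0)) (hp : p < 1)
    (hx : 1 - p ≤ F x) : tailQuantile F p ≤ x := by
  obtain ⟨z, hz⟩ := (hbot.eventually (eventually_lt_nhds (by linarith : (0 : ℝ) < 1 - p))).exists
  exact csInf_le ⟨z, fun y hy => (hF.reflect_lt (hz.trans_le hy)).le⟩ hx

lemma tailQuantile_anti (hF : Monotone F) (hbot : Tendsto F atBot (nhds 0))
    (htop : Tendsto F atTop (nhds 1)) (hq : 0 < q) (hqp : q ≤ p) (hp : p < 1) :
    tailQuantile F p ≤ tailQuantile F q := by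
  obtain ⟨w, hw⟩ := (htop.eventually (eventually_gt_nhds (by linarith : 1 - q < 1))).exists
  refine le_csInf ⟨w, hw.le⟩ fun y (hy : 1 - q ≤ F y) => tailQuantile_le hF hbot hp ?_
  linarith

lemma tailQuantile_div_mem_Icc (hF : Monotone F) (hbot : Tendsto F atBot (nhds 0))
    (htop : Tendsto F atTop (nhds 1)) (hq : 0 < q) (hqp : q ≤ p) (hp : p < 1)
    (hx0 : 0 < x) (hx : F x < 1 - p) (hy : 1 - q ≤ F y) :
    tailQuantile F p / tailQuantile F q ∈ Set.Icc (x / y) 1 := by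
  have hxp := le_tailQuantile hF htop (hq.trans_le hqp) hx
  have hpq := tailQuantile_anti hF hbot htop hq hqp hp
  have hqy := tailQuantile_le hF hbot (hqp.trans_lt hp) hy
  have hq0 : 0 < tailQuantile F q := hx0.trans_le (hxp.trans hpq)
  exact ⟨div_le_div₀ (hx0.le.trans hxp) hxp hq0 hqy, (div_le_one hq0).2 hpq⟩

end TailQuantile

section TailLevel

variable {lam γ c c' u : ℝ}

/-- The point `x` at which `exp (-lam * x ^ γ) = u ^ (-c)`. -/
noncomputable def tailLevel (lam γ c u : ℝ) : ℝ := (c * log u / lam) ^ (1 / γ)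

lemma tendsto_tailLevel (hlam : 0 < lam) (hγ : 0 < γ) (hc : 0 < c) :
    Tendsto (tailLevel lam γ c) atTop atTop :=
  (tendsto_rpow_atTop (by positivity)).comp
    ((tendsto_log_atTop.const_mul_atTop hc).atTop_div_const hlam)

lemma tailLevel_pos (hlam : 0 < lam) (hc : 0 < c) (hu : 1 < u) : 0 < tailLevel lam γ c u := by
  have := log_pos hu
  unfold tailLevel
  positivity

lemma tailLevel_rpow (hlam : 0 < lam) (hγ : 0 < γ) (hc : 0 ≤ c) (hu : 1 ≤ u) :
    tailLevel lam γ c u ^ γ = c * log u / lam := by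
  have := log_nonneg hu
  rw [tailLevel, one_div, rpow_inv_rpow (by positivity) hγ.ne']

lemma log_tailLevel (hlam : 0 < lam) (hc : 0 < c) (hu : 1 < u) :
    log (tailLevel lam γ c u) = (log (c / lam) + log (log u)) / γ := by
  have := log_pos hu
  rw [tailLevel, log_rpow (by positivity), show c * log u / lam = c / lam * log u by ring,
    log_mul (by positivity) this.ne']
  ring

lemma tailLevel_div_tailLevel (hlam : 0 < lam) (hc : 0 ≤ c) (hc' : 0 ≤ c') (hu : 1 < u) :
    tailLevel lam γ c u / tailLevel lam γ c' u = (c / c') ^ (1 / γ) := by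
  have := log_pos hu
  rw [tailLevel, tailLevel, ← div_rpow (by positivity) (by positivity)]
  congr 1
  field_simp

end TailLevel

namespace ExpDomTail

variable {F : ℝ → ℝ} {α β lam γ c c' : ℝ}

lemma eventually_lt_one (htail : ExpDomTail F α β lam γ) (hα : 0 < α) :
    ∀ᶠ x in atTop, F x < 1 := by
  filter_upwards [htail.eventually (eventually_gt_nhds one_pos), eventually_gt_atTop 0]
    with x hratio hx
  have : 0 < α * x ^ β * exp (-lam * x ^ γ) := by positivity
  linarith [(div_pos_iff_of_pos_right this).1 hratio]

lemma tendsto_log_tail_div_log (htail : ExpDomTail F α β lam γ) (hα : 0 < α) (hlam : 0 < lam)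
    (hγ : 0 < γ) (hc : 0 < c) :
    Tendsto (fun u => log (1 - F (tailLevel lam γ c u)) / log u) atTop (nhds (-c)) := by
  have hx := tendsto_tailLevel hlam hγ hc
  have hratio := (htail.comp hx).log one_ne_zero
  have hloglog : Tendsto (fun u => log (log u) / log u) atTop (nhds 0) := by
    simpa [Function.comp_def] using
      (tendsto_pow_log_div_mul_add_atTop 1 0 1 one_ne_zero).comp tendsto_log_atTop
  have hlim := (((hratio.add_const (log α + β / γ * log (c / lam))).div_atTop
    tendsto_log_atTop).add (hloglog.const_mul (β / γ))).sub_const c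
  rw [mul_zero, add_zero, zero_sub] at hlim
  refine hlim.congr' ?_
  filter_upwards [hx.eventually (htail.eventually_lt_one hα), eventually_gt_atTop 1]
    with u hFx hu
  have hL := log_pos hu
  have hx0 := tailLevel_pos (γ := γ) hlam hc hu
  have hlog_ratio : log ((1 - F (tailLevel lam γ c u)) /
      (α * tailLevel lam γ c u ^ β * exp (-lam * tailLevel lam γ c u ^ γ))) =
      log (1 - F (tailLevel lam γ c u)) - (log α + β * ((log (c / lam) + log (log u)) / γ)
        - c * log u) := by
    rw [log_div (by linarith) (by positivity), log_mul (by positivity) (by positivity),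
      log_mul (by positivity) (by positivity), log_rpow hx0, log_exp,
      log_tailLevel hlam hc hu, tailLevel_rpow hlam hγ hc.le hu.le]
    field_simp
    ring
  simp only [Function.comp_apply, hlog_ratio]
  field_simp
  ring

lemma eventually_rpow_neg_lt_tail (htail : ExpDomTail F α β lam γ) (hα : 0 < α) (hlam : 0 < lam)
    (hγ : 0 < γ) (hc : 0 < c) (hcc' : c < c') :
    ∀ᶠ u in atTop, u ^ (-c') < 1 - F (tailLevel lam γ c u) := by
  filter_upwards [(htail.tendsto_log_tail_div_log hα hlam hγ hc).eventually
      (eventually_gt_nhds (neg_lt_neg hcc')),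
    (tendsto_tailLevel hlam hγ hc).eventually (htail.eventually_lt_one hα),
    eventually_gt_atTop 1] with u hlog hF hu
  rw [lt_div_iff₀ (log_pos hu)] at hlog
  rw [← log_lt_log_iff (by positivity) (by linarith), log_rpow (by linarith)]
  exact hlog

lemma eventually_tail_lt_rpow_neg (htail : ExpDomTail F α β lam γ) (hα : 0 < α) (hlam : 0 < lam)
    (hγ : 0 < γ) (hc : 0 < c) (hc'c : c' < c) :
    ∀ᶠ u in atTop, 1 - F (tailLevel lam γ c u) < u ^ (-c') := by
  filter_upwards [(htail.tendsto_log_tail_div_log hα hlam hγ hc).eventually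
      (eventually_lt_nhds (neg_lt_neg hc'c)),
    (tendsto_tailLevel hlam hγ hc).eventually (htail.eventually_lt_one hα),
    eventually_gt_atTop 1] with u hlog hF hu
  rw [div_lt_iff₀ (log_pos hu)] at hlog
  rw [← log_lt_log_iff (by linarith) (by positivity), log_rpow (by linarith)]
  exact hlog

end ExpDomTail

lemma cdfOf_eq_cdf_map {Ω : Type*} [MeasurableSpace Ω] {μ : Measure Ω} [IsProbabilityMeasure μ]
    {X : Ω → ℝ} (hX : Measurable X) : cdfOf μ X = cdf (μ.map X) := by
  have := Measure.isProbabilityMeasure_map (μ := μ) hX.aemeasurable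
  ext x
  rw [cdf_eq_real, measureReal_def, Measure.map_apply hX measurableSet_Iic]
  rfl

theorem stmt_16_general {Ω : Type*} [MeasurableSpace Ω] (μ : Measure Ω) [IsProbabilityMeasure μ]
    (X : Ω → ℝ) (hXmeas : Measurable X)
    (F : ℝ → ℝ) (hFdef : F = cdfOf μ X)
    (α β lam γ : ℝ) (hα : 0 < α) (hlam : 0 < lam) (hγ : 0 < γ)
    (htail : ExpDomTail F α β lam γ)
    (M : ℕ → ℝ) (hM1 : ∀ K, 1 ≤ M K)
    (t : ℝ) (ht : t < 1)
    (hM : Tendsto (fun K : ℕ => M K / (K : ℝ) ^ t) atTop (nhds 0)) :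
    0 < Filter.liminf
      (fun K : ℕ => tailQuantile F (M K / K) / tailQuantile F (1 / (K : ℝ) ^ 2)) atTop := by
  have : IsProbabilityMeasure (μ.map X) := Measure.isProbabilityMeasure_map hXmeas.aemeasurable
  rw [cdfOf_eq_cdf_map hXmeas] at hFdef
  subst hFdef
  have hc : 0 < (1 - t) / 2 := by linarith
  have hK := tendsto_natCast_atTop_atTop (R := ℝ)
  have hbounds : ∀ᶠ K : ℕ in atTop,
      tailQuantile (cdf (μ.map X)) (M K / K) / tailQuantile (cdf (μ.map X)) (1 / (K : ℝ) ^ 2)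
        ∈ Set.Icc (((1 - t) / 2 / 3) ^ (1 / γ)) 1 := by
    filter_upwards [hK.eventually (htail.eventually_rpow_neg_lt_tail hα hlam hγ hc
        (by linarith : (1 - t) / 2 < 1 - t)),
      hK.eventually (htail.eventually_tail_lt_rpow_neg hα hlam hγ three_pos
        (by norm_num : (2 : ℝ) < 3)),
      hM.eventually (eventually_lt_nhds one_pos), hK.eventually_gt_atTop 1]
      with K hlow hup hMK hK1
    have hK0 : (0 : ℝ) < K := by linarith
    rw [div_lt_one (rpow_pos_of_pos hK0 t)] at hMK
    rw [← tailLevel_div_tailLevel hlam hc.le zero_le_three hK1]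
    refine tailQuantile_div_mem_Icc (monotone_cdf _) (tendsto_cdf_atBot _) (tendsto_cdf_atTop _)
      (by positivity) ?_ ?_ (tailLevel_pos hlam hc hK1) ?_ ?_
    · rw [div_le_div_iff₀ (by positivity) hK0]
      nlinarith [hM1 K]
    · rw [div_lt_one hK0]
      calc M K < (K : ℝ) ^ t := hMK
        _ < (K : ℝ) ^ (1 : ℝ) := rpow_lt_rpow_of_exponent_lt hK1 ht
        _ = K := rpow_one _
    · have : M K / K < (K : ℝ) ^ (-(1 - t)) := by
        rw [neg_sub, rpow_sub_one hK0.ne']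
        gcongr
      linarith
    · rw [rpow_neg hK0.le, rpow_two, ← one_div] at hup
      linarith
  exact (rpow_pos_of_pos (by positivity) _).trans_le (le_liminf_of_le
    (isCoboundedUnder_ge_of_eventually_le atTop (hbounds.mono fun _ h => h.2))
    (hbounds.mono fun _ h => h.1))

/-- for a random variable with an exponentially-dominated tail (continuous CDF)
and `M_K ≥ 1` with `M_K / K^μ → 0` for some `μ < 1`, one has
`liminf_K q̄_X(M_K/K) / q̄_X(1/K²) > 0`. -/
theorem stmt_16 {Ω : Type*} [MeasurableSpace Ω] (μ : Measure Ω) [IsProbabilityMeasure μ]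
    (X : Ω → ℝ) (hXmeas : Measurable X)
    (F : ℝ → ℝ) (hFdef : F = cdfOf μ X) (hFcont : Continuous F)
    (α β lam γ : ℝ) (hα : 0 < α) (hlam : 0 < lam) (hγ : 0 < γ)
    (htail : ExpDomTail F α β lam γ)
    (M : ℕ → ℝ) (hM1 : ∀ K, 1 ≤ M K)
    (t : ℝ) (ht : t < 1)
    (hM : Tendsto (fun K : ℕ => M K / (K : ℝ) ^ t) atTop (nhds 0)) :
    0 < Filter.liminf
      (fun K : ℕ => tailQuantile F (M K / K) / tailQuantile F (1 / (K : ℝ) ^ 2)) atTop :=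
  stmt_16_general μ X hXmeas F hFdef α β lam γ hα hlam hγ htail M hM1 t ht hM
end

section
/- Let F be the CDF of an exponentially-dominated tail distribution with parameters (α, β, λ, γ), and set U_K = ((ln K + √(ln K))/λ)^{1/γ}. (1) For each K, let X_1,…,X_K be random variables each with CDF F (no independence assumption). Then P(max_{1≤k≤K} X_k ≤ U_K) → 1 as K → ∞; in particular P(X_{(K)} ≤ U_K) → 1. (2) For each N, let X_{n,k}, n, k ∈ {1,…,N}, be random variables each with CDF F (no independence assumption). Then P(max_{n} X_{n,(N)} ≤ U_{N²}) → 1 as N → ∞. -/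
/-! Each `X_k` exceeds `U_K` with probability `1 - F(U_K)`, so by the union bound, whatever the
dependence, `P(max_k X_k > U_K) ≤ K (1 - F(U_K))`. By the tail asymptotics
`1 - F(U_K) ~ α U_K^β e^{-λ U_K^γ} = α ((ln K + √(ln K))/λ)^{β/γ} e^{-√(ln K)} / K`,
and `e^{-s}` beats every power of `s² + s` with `s = √(ln K)`, so `K (1 - F(U_K)) → 0`.
The top order statistic is the maximum, and the array case is the same bound for `N²` variables. -/

open MeasureTheory ProbabilityTheory Filter

open Real Asymptotics Topology

lemma tendsto_rpow_sq_add_self_div_mul_exp_neg {lam : ℝ} (hlam : 0 < lam) (c : ℝ) :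
    Tendsto (fun s : ℝ => ((s ^ 2 + s) / lam) ^ c * exp (-s)) atTop (𝓝 0) := by
  have hpoly : Tendsto (fun s : ℝ => s ^ (2 * c) * exp (-1 * s)) atTop (𝓝 0) :=
    tendsto_rpow_mul_exp_neg_mul_atTop_nhds_zero _ 1 one_pos
  have hcorr : Tendsto (fun s : ℝ => ((1 + s⁻¹) / lam) ^ c) atTop (𝓝 ((1 / lam) ^ c)) := by
    have : Tendsto (fun s : ℝ => (1 + s⁻¹) / lam) atTop (𝓝 (1 / lam)) := by
      simpa using ((tendsto_const_nhds (x := (1 : ℝ))).add tendsto_inv_atTop_zero).div_const lam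
    exact this.rpow_const (Or.inl (by positivity))
  have hprod := hpoly.mul hcorr
  rw [zero_mul] at hprod
  refine hprod.congr' ?_
  filter_upwards [eventually_gt_atTop 0] with s hs
  have hsplit : (s ^ 2 + s) / lam = s ^ (2 : ℝ) * ((1 + s⁻¹) / lam) := by
    rw [rpow_two]; field_simp
  rw [hsplit, mul_rpow (by positivity) (by positivity), ← rpow_mul hs.le]
  ring_nf

noncomputable def expThreshold (lam γ : ℝ) (K : ℕ) : ℝ :=
  ((log K + √(log K)) / lam) ^ ((1 : ℝ) / γ)

lemma tendsto_expThreshold_atTop {lam γ : ℝ} (hlam : 0 < lam) (hγ : 0 < γ) :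
    Tendsto (expThreshold lam γ) atTop atTop := by
  have hlog : Tendsto (fun K : ℕ => log K) atTop atTop :=
    tendsto_log_atTop.comp tendsto_natCast_atTop_atTop
  have hbase : Tendsto (fun K : ℕ => (log K + √(log K)) / lam) atTop atTop :=
    (hlog.atTop_add_atTop (tendsto_sqrt_atTop.comp hlog)).atTop_div_const hlam
  exact (tendsto_rpow_atTop (one_div_pos.2 hγ)).comp hbase

lemma natCast_mul_expThreshold {lam γ : ℝ} (hlam : 0 < lam) (hγ : γ ≠ 0) (α β : ℝ) {K : ℕ}
    (hK : 1 ≤ K) :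
    K * (α * expThreshold lam γ K ^ β * exp (-lam * expThreshold lam γ K ^ γ)) =
      α * ((√(log K) ^ 2 + √(log K)) / lam) ^ (β / γ) * exp (-√(log K)) := by
  have hL : 0 ≤ log K := log_nonneg (by exact_mod_cast hK)
  have hbase : 0 ≤ (log K + √(log K)) / lam := by positivity
  have hpow (r : ℝ) : expThreshold lam γ K ^ r = ((log K + √(log K)) / lam) ^ (r / γ) := by
    rw [expThreshold, ← rpow_mul hbase, one_div_mul_eq_div]
  have hexp : exp (-lam * expThreshold lam γ K ^ γ) = (K : ℝ)⁻¹ * exp (-√(log K)) := by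
    rw [hpow, div_self hγ, rpow_one, show -lam * ((log K + √(log K)) / lam) =
      -log K + -√(log K) by field_simp; ring, exp_add, exp_neg, exp_log (by positivity)]
  rw [hexp, hpow, sq_sqrt hL]
  field_simp

lemma ExpDomTail.tendsto_natCast_mul_one_sub_expThreshold {F : ℝ → ℝ} {α β lam γ : ℝ}
    (htail : ExpDomTail F α β lam γ) (hlam : 0 < lam) (hγ : 0 < γ) :
    Tendsto (fun K : ℕ => K * (1 - F (expThreshold lam γ K))) atTop (𝓝 0) := by
  set U := expThreshold lam γ
  have hequiv : (fun K => 1 - F (U K)) ~[atTop]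
      fun K => α * U K ^ β * exp (-lam * U K ^ γ) :=
    isEquivalent_of_tendsto_one (htail.comp (tendsto_expThreshold_atTop hlam hγ))
  have hs : Tendsto (fun K : ℕ => √(log K)) atTop atTop :=
    tendsto_sqrt_atTop.comp (tendsto_log_atTop.comp tendsto_natCast_atTop_atTop)
  have hbound : Tendsto (fun K : ℕ => K * (α * U K ^ β * exp (-lam * U K ^ γ))) atTop (𝓝 0) := by
    have hs_bound :=
      ((tendsto_rpow_sq_add_self_div_mul_exp_neg hlam (β / γ)).const_mul α).comp hs
    rw [mul_zero] at hs_bound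
    refine hs_bound.congr' ?_
    filter_upwards [eventually_ge_atTop 1] with K hK
    rw [natCast_mul_expThreshold hlam hγ.ne' α β hK, Function.comp_apply, mul_assoc]
  exact (IsEquivalent.refl.mul hequiv).symm.tendsto_nhds hbound

lemma measure_lt_eq_ofReal_one_sub_cdfOf {Ω : Type*} [MeasurableSpace Ω] (μ : Measure Ω)
    [IsProbabilityMeasure μ] {X : Ω → ℝ} (hX : Measurable X) (u : ℝ) :
    μ {ω | u < X ω} = ENNReal.ofReal (1 - cdfOf μ X u) := by
  have hcompl : {ω | u < X ω} = {ω | X ω ≤ u}ᶜ := by ext; simp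
  rw [hcompl, prob_compl_eq_one_sub (measurableSet_le hX measurable_const), cdfOf,
    ENNReal.ofReal_sub _ ENNReal.toReal_nonneg, ENNReal.ofReal_one,
    ENNReal.ofReal_toReal (measure_ne_top μ _)]

lemma one_sub_card_mul_le_measure_forall_le {Ω : Type*} [MeasurableSpace Ω] (μ : Measure Ω)
    [IsProbabilityMeasure μ] {ι : Type*} [Fintype ι] {X : ι → Ω → ℝ}
    (hX : ∀ i, Measurable (X i)) {F : ℝ → ℝ} {u : ℝ} (hF : ∀ i, cdfOf μ (X i) u = F u) :
    1 - ENNReal.ofReal (Fintype.card ι * (1 - F u)) ≤ μ {ω | ∀ i, X i ω ≤ u} := by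
  have hcompl : {ω | ∀ i, X i ω ≤ u} = (⋃ i, {ω | u < X i ω})ᶜ := by ext; simp
  have hmeas : MeasurableSet (⋃ i, {ω | u < X i ω}) :=
    MeasurableSet.iUnion fun i => hX i measurableSet_Ioi
  have hunion : μ (⋃ i, {ω | u < X i ω}) ≤ ENNReal.ofReal (Fintype.card ι * (1 - F u)) := by
    calc μ (⋃ i, {ω | u < X i ω}) ≤ ∑ i, μ {ω | u < X i ω} := measure_iUnion_fintype_le μ _
      _ = ENNReal.ofReal (Fintype.card ι * (1 - F u)) := by
        simp only [measure_lt_eq_ofReal_one_sub_cdfOf μ (hX _), hF, Finset.sum_const,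
          Finset.card_univ, nsmul_eq_mul]
        rw [ENNReal.ofReal_mul (Nat.cast_nonneg _), ENNReal.ofReal_natCast]
  rw [hcompl, prob_compl_eq_one_sub hmeas]
  exact tsub_le_tsub_left hunion 1

lemma tendsto_measure_forall_le_of_card_mul_tail {κ : Type*} {l : Filter κ} {Ω : κ → Type*}
    [∀ K, MeasurableSpace (Ω K)] (μ : ∀ K, Measure (Ω K)) [∀ K, IsProbabilityMeasure (μ K)]
    {ι : κ → Type*} [∀ K, Fintype (ι K)] {X : ∀ K, ι K → Ω K → ℝ}
    (hX : ∀ K i, Measurable (X K i)) {F : ℝ → ℝ} {u : κ → ℝ}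
    (hF : ∀ K i, cdfOf (μ K) (X K i) (u K) = F (u K))
    (htail : Tendsto (fun K => Fintype.card (ι K) * (1 - F (u K))) l (𝓝 0)) :
    Tendsto (fun K => μ K {ω | ∀ i, X K i ω ≤ u K}) l (𝓝 1) := by
  have hlower : Tendsto (fun K => 1 - ENNReal.ofReal (Fintype.card (ι K) * (1 - F (u K)))) l
      (𝓝 1) := by
    simpa using ENNReal.Tendsto.sub tendsto_const_nhds (ENNReal.tendsto_ofReal htail)
      (Or.inl ENNReal.one_ne_top)
  exact tendsto_of_tendsto_of_tendsto_of_le_of_le hlower tendsto_const_nhds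
    (fun K => one_sub_card_mul_le_measure_forall_le (μ K) (hX K) (hF K))
    (fun K => prob_le_one)

lemma orderStat_self_le_iff {K : ℕ} (hK : 1 ≤ K) (v : Fin K → ℝ) (u : ℝ) :
    orderStat v K ≤ u ↔ ∀ k, v k ≤ u := by
  set l : List ℝ := (Finset.univ.val.map v).sort (· ≤ ·)
  have hlen : l.length = K := by simp [l]
  have hsorted : l.Pairwise (· ≤ ·) := Multiset.pairwise_sort _ _
  have hmem (x : ℝ) : x ∈ l ↔ ∃ k, v k = x := by simp [l]
  have hidx : K - 1 < l.length := by omega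
  have hlast : orderStat v K = l[K - 1] := List.getD_eq_getElem l 0 hidx
  rw [hlast]
  constructor
  · intro h k
    obtain ⟨i, hi, hvi⟩ := List.getElem_of_mem ((hmem _).2 ⟨k, rfl⟩)
    rw [← hvi]
    rcases (show i ≤ K - 1 by omega).eq_or_lt with rfl | hlt
    · exact h
    · exact (List.pairwise_iff_getElem.1 hsorted i (K - 1) hi hidx hlt).trans h
  · intro h
    obtain ⟨k, hk⟩ := (hmem _).1 (l.getElem_mem hidx)
    exact hk ▸ h k

theorem stmt_17_general
    (F : ℝ → ℝ)
    (α β lam γ : ℝ) (hlam : 0 < lam) (hγ : 0 < γ)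
    (htail : ExpDomTail F α β lam γ)
    (U : ℕ → ℝ)
    (hU : ∀ K : ℕ, U K = ((Real.log K + Real.sqrt (Real.log K)) / lam) ^ ((1 : ℝ) / γ)) :
    (∀ (Ω : ℕ → Type) (inst : ∀ K, MeasurableSpace (Ω K)) (μ : ∀ K, Measure (Ω K)),
      (∀ K, IsProbabilityMeasure (μ K)) →
      ∀ X : ∀ K, Fin K → Ω K → ℝ, (∀ K k, Measurable (X K k)) →
      (∀ K (k : Fin K), cdfOf (μ K) (X K k) = F) →
      Tendsto (fun K => μ K {ω | orderStat (fun k => X K k ω) K ≤ U K}) atTop (nhds 1)) ∧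
    (∀ (Ω : ℕ → Type) (inst : ∀ N, MeasurableSpace (Ω N)) (μ : ∀ N, Measure (Ω N)),
      (∀ N, IsProbabilityMeasure (μ N)) →
      ∀ X : ∀ N, Fin N → Fin N → Ω N → ℝ, (∀ N n k, Measurable (X N n k)) →
      (∀ N (n k : Fin N), cdfOf (μ N) (X N n k) = F) →
      Tendsto (fun N => μ N {ω | ∀ n : Fin N, orderStat (fun k => X N n k ω) N ≤ U (N ^ 2)})
        atTop (nhds 1)) := by
  obtain rfl : U = expThreshold lam γ := funext hU
  have hcount := htail.tendsto_natCast_mul_one_sub_expThreshold hlam hγ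
  refine ⟨fun Ω _ μ _ X hX hF => ?_, fun Ω _ μ _ X hX hF => ?_⟩
  · have hmax := tendsto_measure_forall_le_of_card_mul_tail μ hX
      (fun K k => congrFun (hF K k) _) (by simpa using hcount)
    refine hmax.congr' ?_
    filter_upwards [eventually_ge_atTop 1] with K hK
    simp_rw [orderStat_self_le_iff hK]
  · have hmax := tendsto_measure_forall_le_of_card_mul_tail μ
      (X := fun N (p : Fin N × Fin N) => X N p.1 p.2) (fun N p => hX N p.1 p.2)
      (u := fun N => expThreshold lam γ (N ^ 2)) (fun N p => congrFun (hF N p.1 p.2) _)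
      (by simpa [sq, Function.comp_def] using hcount.comp (tendsto_pow_atTop two_ne_zero))
    refine hmax.congr' ?_
    filter_upwards [eventually_ge_atTop 1] with N hN
    simp_rw [orderStat_self_le_iff hN, Prod.forall]

/-- with `U_K = ((ln K + √(ln K))/λ)^{1/γ}` and `F` an exponentially-dominated
tail CDF: (1) for any random variables `X_1,…,X_K` each with CDF `F` (no independence),
`P(max_k X_k ≤ U_K) → 1` (equivalently `P(X_{(K)} ≤ U_K) → 1`); (2) for any array
`X_{n,k}`, `n,k ∈ {1,…,N}`, each entry with CDF `F`, `P(max_n X_{n,(N)} ≤ U_{N²}) → 1`. -/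
theorem stmt_17
    (F : ℝ → ℝ) (hFcont : Continuous F)
    (α β lam γ : ℝ) (hα : 0 < α) (hlam : 0 < lam) (hγ : 0 < γ)
    (htail : ExpDomTail F α β lam γ)
    (U : ℕ → ℝ)
    (hU : ∀ K : ℕ, U K = ((Real.log K + Real.sqrt (Real.log K)) / lam) ^ ((1 : ℝ) / γ)) :
    (∀ (Ω : ℕ → Type) (inst : ∀ K, MeasurableSpace (Ω K)) (μ : ∀ K, Measure (Ω K)),
      (∀ K, IsProbabilityMeasure (μ K)) →
      ∀ X : ∀ K, Fin K → Ω K → ℝ, (∀ K k, Measurable (X K k)) →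
      (∀ K (k : Fin K), cdfOf (μ K) (X K k) = F) →
      Tendsto (fun K => μ K {ω | orderStat (fun k => X K k ω) K ≤ U K}) atTop (nhds 1)) ∧
    (∀ (Ω : ℕ → Type) (inst : ∀ N, MeasurableSpace (Ω N)) (μ : ∀ N, Measure (Ω N)),
      (∀ N, IsProbabilityMeasure (μ N)) →
      ∀ X : ∀ N, Fin N → Fin N → Ω N → ℝ, (∀ N n k, Measurable (X N n k)) →
      (∀ N (n k : Fin N), cdfOf (μ N) (X N n k) = F) →
      Tendsto (fun N => μ N {ω | ∀ n : Fin N, orderStat (fun k => X N n k ω) N ≤ U (N ^ 2)})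
        atTop (nhds 1)) :=
  stmt_17_general F α β lam γ hlam hγ htail U hU
end
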